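/- arXiv:0708.1654 — 2 statements merged into one kernel-verified Lean document; each statement's English description precedes it below -/
import Mathlib

section
/- Let g be a DG Lie algebra over a field K of characteristic 0, m a nilpotent commutative non-unital K-algebra, γ ∈ m⊗g^0, and define af(γ)(ω) := [γ,ω] − d(γ) for ω ∈ m⊗g^1. If ω satisfies the Maurer–Cartan equation d(ω) + ½[ω,ω] = 0, then the gauge-transformed element exp(af(γ))(ω) (which is well defined since af(γ) is locally nilpotent) also satisfies the Maurer–Cartan equation. -/
/-- A differential graded Lie algebra over `K`, with degree bookkeeping done
via explicit index equalities. -/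
structure DGLA (K : Type) [Field K] where
  carrier : ℤ → Type
  [acg : ∀ i, AddCommGroup (carrier i)]
  [mod : ∀ i, Module K (carrier i)]
  d : ∀ i j, i + 1 = j → carrier i →ₗ[K] carrier j
  br : ∀ i j k, i + j = k → carrier i →ₗ[K] carrier j →ₗ[K] carrier k
  d_sq : ∀ i j k (hij : i + 1 = j) (hjk : j + 1 = k) (x : carrier i),
    d j k hjk (d i j hij x) = 0
  antisym : ∀ i j k (h1 : i + j = k) (h2 : j + i = k) (x : carrier i)
    (y : carrier j), br i j k h1 x y = (-((i * j).negOnePow : ℤ)) • br j i k h2 y x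
  leibniz : ∀ i j k k' i' j' (hij : i + j = k) (hk : k + 1 = k')
    (hi : i + 1 = i') (hj : j + 1 = j') (h1 : i' + j = k') (h2 : i + j' = k')
    (x : carrier i) (y : carrier j),
    d k k' hk (br i j k hij x y)
      = br i' j k' h1 (d i i' hi x) y
        + (i.negOnePow : ℤ) • br i j' k' h2 x (d j j' hj y)
  jacobi : ∀ i j k p q r s (hjk : j + k = p) (h1 : i + p = q) (hij : i + j = r)
    (h2 : r + k = q) (hik : i + k = s) (h3 : j + s = q)
    (x : carrier i) (y : carrier j) (z : carrier k),
    br i p q h1 x (br j k p hjk y z)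
      = br r k q h2 (br i j r hij x y) z
        + ((i * j).negOnePow : ℤ) • br j s q h3 y (br i k s hik x z)

attribute [instance] DGLA.acg DGLA.mod

/-!
The gauge action is the time-one flow of the affine vector field `af x = [γ, x] - dγ`, and along
this flow the curvature `F x = dx + ½ [x, x]` obeys the linear equation `F' = [γ, F]`. On Taylor
coefficients at `t = 0` this is the recursion `F_{n+1} = [γ, F_n]`, so `F_n = ad(γ)^n (F ω) = 0`
for every `n`; since `ad γ` is nilpotent the flow is a finite exponential series, and a Cauchy
product identifies the curvature of the gauge transform with `∑ F_n / n!`.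
-/

open Finset
open scoped Nat

lemma sum_range_sum_range_eq_sum_antidiagonal {M : Type*} [AddCommMonoid M] {m : ℕ}
    {f : ℕ → ℕ → M} (hf : ∀ i j, m ≤ i ∨ m ≤ j → f i j = 0) :
    ∑ i ∈ range m, ∑ j ∈ range m, f i j
      = ∑ n ∈ range (2 * m), ∑ ij ∈ antidiagonal n, f ij.1 ij.2 := by
  rw [← sum_product', ← sum_fiberwise_of_maps_to (g := fun ij : ℕ × ℕ => ij.1 + ij.2)
    (t := range (2 * m)) fun ij hij => by simp only [mem_product, mem_range] at hij ⊢; omega]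
  refine sum_congr rfl fun n _ => sum_subset (fun ij hij => ?_) fun ij hn hij => hf _ _ ?_
  · simpa using (mem_filter.1 hij).2
  · simp only [mem_filter, mem_product, mem_range, not_and,
      HasAntidiagonal.mem_antidiagonal] at hn hij
    omega

lemma inv_factorial_mul_inv_factorial (K : Type*) [Field K] [CharZero K] (i j : ℕ) :
    (i ! : K)⁻¹ * (j ! : K)⁻¹ = ((i + j)! : K)⁻¹ * (i + j).choose i := by
  have : ((i + j)! : K) ≠ 0 := Nat.cast_ne_zero.2 (Nat.factorial_ne_zero _)
  rw [Nat.cast_add_choose]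
  field_simp

section Curvature

variable {K V W : Type*} [Field K] [AddCommGroup V] [Module K V] [AddCommGroup W] [Module K W]

/-- Taylor coefficients at `t = 0` of the flow `t ↦ exp (t • af) ω` of the affine vector field
`af x = A x - δ`. -/
def gaugeTerm (A : Module.End K V) (δ ω : V) : ℕ → V
  | 0 => ω
  | k + 1 => (A ^ (k + 1)) ω - (A ^ k) δ

lemma gaugeTerm_succ (A : Module.End K V) (δ ω : V) (k : ℕ) :
    gaugeTerm A δ ω (k + 1) = A (gaugeTerm A δ ω k) - if k = 0 then δ else 0 := by
  cases k with
  | zero => simp [gaugeTerm]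
  | succ k => simp [gaugeTerm, pow_succ' A (k + 1), pow_succ' A k]

lemma gaugeTerm_eq_zero_of_lt {A : Module.End K V} {N : ℕ} (hA : A ^ N = 0) (δ ω : V)
    {k : ℕ} (hk : N < k) : gaugeTerm A δ ω k = 0 := by
  obtain ⟨k, rfl⟩ : ∃ m, k = m + 1 := ⟨k - 1, by omega⟩
  simp [gaugeTerm, pow_eq_zero_of_le (by omega : N ≤ k + 1) hA,
    pow_eq_zero_of_le (by omega : N ≤ k) hA]

lemma sum_inv_factorial_smul_gaugeTerm {A : Module.End K V} {N : ℕ} (hA : A ^ N = 0) (δ ω : V) :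
    ∑ k ∈ range (N + 1), (k ! : K)⁻¹ • gaugeTerm A δ ω k
      = ∑ k ∈ range N, (k ! : K)⁻¹ • (A ^ k) ω
        - ∑ k ∈ range N, ((k + 1)! : K)⁻¹ • (A ^ k) δ := by
  have hω : ∑ k ∈ range N, (k ! : K)⁻¹ • (A ^ k) ω
      = ∑ k ∈ range (N + 1), (k ! : K)⁻¹ • (A ^ k) ω := by
    simp [sum_range_succ, hA]
  rw [hω, sum_range_succ', sum_range_succ' _ N, add_sub_right_comm, ← sum_sub_distrib]
  simp [gaugeTerm, smul_sub]

/-- The `n`-th derivative at `t = 0` of the curvature `d x(t) + ½ β x(t) x(t)` of a curve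
whose `k`-th derivative at `0` is `x k`. -/
def curvatureCoeff (d : V →ₗ[K] W) (β : V →ₗ[K] V →ₗ[K] W) (x : ℕ → V) (n : ℕ) : W :=
  d (x n) + (1 / 2 : K) • ∑ ij ∈ antidiagonal n, n.choose ij.1 • β (x ij.1) (x ij.2)

variable {d : V →ₗ[K] W} {β : V →ₗ[K] V →ₗ[K] W}

lemma sum_antidiagonal_choose_smul_comm (hsym : ∀ u v, β u v = β v u) (x y : ℕ → V) (n : ℕ) :
    ∑ ij ∈ antidiagonal n, n.choose ij.1 • β (y ij.1) (x ij.2)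
      = ∑ ij ∈ antidiagonal n, n.choose ij.1 • β (x ij.1) (y ij.2) := by
  rw [← Nat.sum_antidiagonal_swap]
  refine sum_congr rfl fun ij hij => ?_
  rw [Prod.fst_swap, Prod.snd_swap, hsym,
    Nat.choose_symm_of_eq_add (mem_antidiagonal.1 hij).symm]

lemma sum_antidiagonal_choose_succ_smul (hsym : ∀ u v, β u v = β v u) (x : ℕ → V) (n : ℕ) :
    ∑ ij ∈ antidiagonal (n + 1), (n + 1).choose ij.1 • β (x ij.1) (x ij.2)
      = 2 • ∑ ij ∈ antidiagonal n, n.choose ij.1 • β (x ij.1) (x (ij.2 + 1)) := by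
  rw [sum_antidiagonal_choose_succ_nsmul (fun i j => β (x i) (x j)), two_nsmul,
    ← Nat.sum_antidiagonal_swap (f := fun ij => n.choose ij.2 • β (x (ij.1 + 1)) (x ij.2))]
  simp only [Prod.fst_swap, Prod.snd_swap, hsym (x (_ + 1))]

lemma sum_antidiagonal_choose_smul_ite_eq (x : ℕ → V) (v : V) (n : ℕ) :
    ∑ ij ∈ antidiagonal n, n.choose ij.1 • β (x ij.1) (if ij.2 = 0 then v else 0)
      = β (x n) v := by
  rw [sum_eq_single_of_mem (n, 0) (by simp)]
  · simp
  · rintro ⟨i, j⟩ hij hne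
    have hj : j ≠ 0 := by
      rintro rfl
      simp_all
    simp [hj]

variable [CharZero K]

lemma map_sum_inv_factorial_smul₂ {x : ℕ → V} {m : ℕ} (hx : ∀ k, m ≤ k → x k = 0) :
    β (∑ k ∈ range m, (k ! : K)⁻¹ • x k) (∑ k ∈ range m, (k ! : K)⁻¹ • x k)
      = ∑ n ∈ range (2 * m),
          (n ! : K)⁻¹ • ∑ ij ∈ antidiagonal n, n.choose ij.1 • β (x ij.1) (x ij.2) := by
  simp only [map_sum, map_smul, LinearMap.sum_apply, LinearMap.smul_apply, smul_sum, smul_smul]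
  rw [sum_comm, sum_range_sum_range_eq_sum_antidiagonal fun i j hij => by
    rcases hij with hi | hj <;> simp [*]]
  refine sum_congr rfl fun n _ => sum_congr rfl fun ij hij => ?_
  rw [← mem_antidiagonal.1 hij, ← Nat.cast_smul_eq_nsmul K, smul_smul, mul_comm,
    inv_factorial_mul_inv_factorial]

lemma curvature_sum_inv_factorial_smul {x : ℕ → V} {m : ℕ} (hx : ∀ k, m ≤ k → x k = 0) :
    d (∑ k ∈ range m, (k ! : K)⁻¹ • x k)
        + (1 / 2 : K) • β (∑ k ∈ range m, (k ! : K)⁻¹ • x k) (∑ k ∈ range m, (k ! : K)⁻¹ • x k)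
      = ∑ n ∈ range (2 * m), (n ! : K)⁻¹ • curvatureCoeff d β x n := by
  have hd : d (∑ k ∈ range m, (k ! : K)⁻¹ • x k)
      = ∑ n ∈ range (2 * m), (n ! : K)⁻¹ • d (x n) := by
    simp only [map_sum, map_smul]
    refine sum_subset (range_subset_range.2 (show m ≤ 2 * m by omega)) fun k _ hk => ?_
    simp [hx k (by simpa using hk)]
  rw [hd, map_sum_inv_factorial_smul₂ hx, smul_sum, ← sum_add_distrib]
  refine sum_congr rfl fun n _ => ?_
  rw [curvatureCoeff, smul_add, smul_comm (1 / 2 : K)]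

variable {A : Module.End K V} {B : Module.End K W} {δ : V}

lemma curvatureCoeff_succ (hsym : ∀ u v, β u v = β v u)
    (hleib : ∀ u, d (A u) = β δ u + B (d u))
    (hjac : ∀ u v, B (β u v) = β (A u) v + β u (A v)) (hdδ : d δ = 0)
    {x : ℕ → V} (hx : ∀ k, x (k + 1) = A (x k) - if k = 0 then δ else 0) (n : ℕ) :
    curvatureCoeff d β x (n + 1) = B (curvatureCoeff d β x n) := by
  have hd : d (x (n + 1)) = β δ (x n) + B (d (x n)) := by
    rw [hx, map_sub, hleib]
    split_ifs <;> simp [hdδ]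
  have hS : ∑ ij ∈ antidiagonal (n + 1), (n + 1).choose ij.1 • β (x ij.1) (x ij.2)
      = 2 • (∑ ij ∈ antidiagonal n, n.choose ij.1 • β (x ij.1) (A (x ij.2)) - β (x n) δ) := by
    simp only [sum_antidiagonal_choose_succ_smul hsym, hx, map_sub, smul_sub, sum_sub_distrib,
      sum_antidiagonal_choose_smul_ite_eq]
  have hBS : B (∑ ij ∈ antidiagonal n, n.choose ij.1 • β (x ij.1) (x ij.2))
      = 2 • ∑ ij ∈ antidiagonal n, n.choose ij.1 • β (x ij.1) (A (x ij.2)) := by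
    simp only [map_sum, map_nsmul, hjac, smul_add, sum_add_distrib, two_nsmul,
      sum_antidiagonal_choose_smul_comm hsym x (fun k => A (x k))]
  rw [curvatureCoeff, curvatureCoeff, hd, hS, map_add, map_smul, hBS, hsym δ]
  module

lemma curvatureCoeff_gaugeTerm_eq_zero (hsym : ∀ u v, β u v = β v u)
    (hleib : ∀ u, d (A u) = β δ u + B (d u))
    (hjac : ∀ u v, B (β u v) = β (A u) v + β u (A v)) (hdδ : d δ = 0) {ω : V}
    (hMC : d ω + (1 / 2 : K) • β ω ω = 0) (n : ℕ) :
    curvatureCoeff d β (gaugeTerm A δ ω) n = 0 := by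
  induction n with
  | zero => simpa [curvatureCoeff, gaugeTerm] using hMC
  | succ n ih =>
    rw [curvatureCoeff_succ hsym hleib hjac hdδ (gaugeTerm_succ A δ ω), ih, map_zero]

end Curvature

namespace DGLA

variable {K : Type} [Field K] (g : DGLA K)

lemma br_one_one_symm (x y : g.carrier 1) :
    g.br 1 1 2 (by norm_num) x y = g.br 1 1 2 (by norm_num) y x := by
  simpa using g.antisym 1 1 2 (by norm_num) (by norm_num) x y

lemma d_br_zero_one (γ : g.carrier 0) (x : g.carrier 1) :
    g.d 1 2 (by norm_num) (g.br 0 1 1 (by norm_num) γ x)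
      = g.br 1 1 2 (by norm_num) (g.d 0 1 (by norm_num) γ) x
        + g.br 0 2 2 (by norm_num) γ (g.d 1 2 (by norm_num) x) := by
  simpa using g.leibniz 0 1 1 2 1 2 (by norm_num) (by norm_num) (by norm_num) (by norm_num)
    (by norm_num) (by norm_num) γ x

lemma br_zero_br_one_one (γ : g.carrier 0) (x y : g.carrier 1) :
    g.br 0 2 2 (by norm_num) γ (g.br 1 1 2 (by norm_num) x y)
      = g.br 1 1 2 (by norm_num) (g.br 0 1 1 (by norm_num) γ x) y
        + g.br 1 1 2 (by norm_num) x (g.br 0 1 1 (by norm_num) γ y) := by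
  simpa using g.jacobi 0 1 1 2 2 1 1 (by norm_num) (by norm_num) (by norm_num) (by norm_num)
    (by norm_num) (by norm_num) γ x y

end DGLA

theorem gauge_transformation_preserves_MC
    (K : Type) [Field K] [CharZero K] (g : DGLA K) (γ : g.carrier 0) (N : ℕ)
    (hnil1 : (g.br 0 1 1 (by norm_num) γ) ^ N = 0)
    (ω : g.carrier 1)
    (hMC : g.d 1 2 (by norm_num) ω
      + (1 / 2 : K) • g.br 1 1 2 (by norm_num) ω ω = 0)
    (E : g.carrier 1)
    (hE : E = ∑ k ∈ Finset.range N,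
        ((k.factorial : K)⁻¹ • ((g.br 0 1 1 (by norm_num) γ) ^ k) ω)
      - ∑ k ∈ Finset.range N,
        (((k + 1).factorial : K)⁻¹ •
          ((g.br 0 1 1 (by norm_num) γ) ^ k) (g.d 0 1 (by norm_num) γ))) :
    g.d 1 2 (by norm_num) E + (1 / 2 : K) • g.br 1 1 2 (by norm_num) E E = 0 := by
  rw [hE, ← sum_inv_factorial_smul_gaugeTerm hnil1,
    curvature_sum_inv_factorial_smul fun k hk => gaugeTerm_eq_zero_of_lt hnil1 _ _ hk]
  refine sum_eq_zero fun n _ => ?_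
  rw [curvatureCoeff_gaugeTerm_eq_zero g.br_one_one_symm (g.d_br_zero_one γ)
    (g.br_zero_br_one_one γ) (g.d_sq 0 1 2 _ _ γ) hMC, smul_zero]
end

section
/- Let K be a field of characteristic 0, and let g, h be DG Lie algebras with a surjective quasi-isomorphism φ : g → h of DG Lie algebras. Then for every Maurer–Cartan element β ∈ ħ·h^1[[ħ]], there exists a Maurer–Cartan element α ∈ ħ·g^1[[ħ]] with φ(α) ≡ β modulo a gauge transformation — in the special case where g^0 = h^0 = 0 and g^{-1} = h^{-1} = 0, there exists α with φ(α) = β exactly, constructed order by order in ħ. -/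
/-!
The lift is built one power of `ħ` at a time. Suppose `a 1, …, a (n - 1)` lift `b 1, …, b (n - 1)`
and solve the Maurer–Cartan equation below order `n`, and let `c n` be any preimage of `b n`. The
order-`n` obstruction `z = d (c n) + ½ ∑ [a i, a (n - i)]` is closed, by the Leibniz rule and
because `[x, [x, x]] = 0` for odd `x` (Jacobi gives `3 [x, [x, x]] = 0`), and `φ z = 0` since `β`
is Maurer–Cartan. The kernel of a surjective quasi-isomorphism is acyclic, so `z = d v` with
`φ v = 0`, and `a n = c n - v` solves the equation at order `n` and still maps to `b n`.
-/

open Finset in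
theorem Finset.Nat.sum_antidiagonal_antidiagonal_rotate {M : Type*} [AddCommMonoid M]
    (f : ℕ → ℕ → ℕ → M) (n : ℕ) :
    ∑ p ∈ antidiagonal n, ∑ q ∈ antidiagonal p.2, f p.1 q.1 q.2 =
      ∑ p ∈ antidiagonal n, ∑ q ∈ antidiagonal p.2, f q.2 p.1 q.1 := by
  simp only [sum_sigma']
  apply sum_nbij' (fun ⟨⟨i, _⟩, ⟨j, k⟩⟩ ↦ ⟨(j, k + i), (k, i)⟩)
    (fun ⟨⟨j, _⟩, ⟨k, i⟩⟩ ↦ ⟨(i, j + k), (j, k)⟩) <;> aesop (add simp [add_comm, add_left_comm])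

namespace DGLA

open Finset

variable {K : Type} [Field K]

section Identities

variable (g : DGLA K)

theorem br_two_one (x : g.carrier 2) (y : g.carrier 1) :
    g.br 2 1 3 (by norm_num) x y = -g.br 1 2 3 (by norm_num) y x := by
  rw [g.antisym 2 1 3 _ (by norm_num)]
  norm_num [Int.negOnePow_even 2 even_two]

theorem d_br_one_one (x y : g.carrier 1) :
    g.d 2 3 (by norm_num) (g.br 1 1 2 (by norm_num) x y) =
      -g.br 1 2 3 (by norm_num) y (g.d 1 2 (by norm_num) x)
        - g.br 1 2 3 (by norm_num) x (g.d 1 2 (by norm_num) y) := by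
  rw [g.leibniz 1 1 2 3 2 2 _ _ (by norm_num) (by norm_num) (by norm_num) (by norm_num),
    br_two_one]
  norm_num [sub_eq_add_neg]

theorem jacobi_one_one_one (x y z : g.carrier 1) :
    g.br 1 2 3 (by norm_num) x (g.br 1 1 2 (by norm_num) y z) =
      -g.br 1 2 3 (by norm_num) z (g.br 1 1 2 (by norm_num) x y)
        - g.br 1 2 3 (by norm_num) y (g.br 1 1 2 (by norm_num) x z) := by
  rw [g.jacobi 1 1 1 2 3 2 2 _ _ (by norm_num) (by norm_num) (by norm_num) (by norm_num),
    br_two_one]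
  norm_num [sub_eq_add_neg]

end Identities

/-- The coefficient of `ħ ^ n` in `[α, α]`, where `α = ∑ n, a n ħ ^ n`. -/
def bracketSq (g : DGLA K) (a : ℕ → g.carrier 1) (n : ℕ) : g.carrier 2 :=
  ∑ i ∈ range (n + 1), g.br 1 1 2 (by norm_num) (a i) (a (n - i))

/-- The coefficient of `ħ ^ n` in `dα + ½ [α, α]`. -/
def mcCoeff (g : DGLA K) (a : ℕ → g.carrier 1) (n : ℕ) : g.carrier 2 :=
  g.d 1 2 (by norm_num) (a n) + (1 / 2 : K) • g.bracketSq a n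

section MaurerCartan

variable (g : DGLA K) (a : ℕ → g.carrier 1)

theorem bracketSq_eq_sum_antidiagonal (n : ℕ) :
    g.bracketSq a n = ∑ p ∈ antidiagonal n, g.br 1 1 2 (by norm_num) (a p.1) (a p.2) :=
  (Nat.sum_antidiagonal_eq_sum_range_succ (fun i j ↦ g.br 1 1 2 _ (a i) (a j)) n).symm

theorem bracketSq_congr {a' : ℕ → g.carrier 1} {n : ℕ} (ha : a 0 = 0) (ha' : a' 0 = 0)
    (h : ∀ k, 0 < k → k < n → a k = a' k) : g.bracketSq a n = g.bracketSq a' n := by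
  refine sum_congr rfl fun i hi ↦ ?_
  rw [mem_range] at hi
  rcases Nat.eq_zero_or_pos i with rfl | hi0
  · simp [ha, ha']
  rcases Nat.eq_zero_or_pos (n - i) with hni | hni
  · simp [hni, ha, ha']
  rw [h i hi0 (by omega), h (n - i) hni (by omega)]

theorem mcCoeff_congr {a' : ℕ → g.carrier 1} {n : ℕ} (h : ∀ k ≤ n, a k = a' k) :
    g.mcCoeff a n = g.mcCoeff a' n := by
  have hsq : g.bracketSq a n = g.bracketSq a' n := sum_congr rfl fun i hi ↦ by
    rw [mem_range] at hi
    rw [h i (by omega), h (n - i) (by omega)]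
  rw [mcCoeff, mcCoeff, hsq, h n le_rfl]

theorem mcCoeff_sub_mcCoeff {a' : ℕ → g.carrier 1} {n : ℕ} (ha : a 0 = 0) (ha' : a' 0 = 0)
    (h : ∀ k, 0 < k → k < n → a k = a' k) :
    g.mcCoeff a n - g.mcCoeff a' n = g.d 1 2 (by norm_num) (a n - a' n) := by
  rw [mcCoeff, mcCoeff, g.bracketSq_congr a ha ha' h, map_sub]
  abel

theorem d_bracketSq (n : ℕ) :
    g.d 2 3 (by norm_num) (g.bracketSq a n) =
      -(2 • ∑ p ∈ antidiagonal n,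
        g.br 1 2 3 (by norm_num) (a p.1) (g.d 1 2 (by norm_num) (a p.2))) := by
  simp only [bracketSq_eq_sum_antidiagonal, map_sum, d_br_one_one, sum_sub_distrib,
    sum_neg_distrib, two_nsmul, neg_add]
  rw [← Nat.sum_antidiagonal_swap]
  simp only [Prod.fst_swap, Prod.snd_swap, sub_eq_add_neg]

theorem sum_br_bracketSq_eq_zero [CharZero K] (n : ℕ) :
    ∑ p ∈ antidiagonal n, g.br 1 2 3 (by norm_num) (a p.1) (g.bracketSq a p.2) = 0 := by
  set T := ∑ p ∈ antidiagonal n, g.br 1 2 3 (by norm_num) (a p.1) (g.bracketSq a p.2)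
  let f : ℕ → ℕ → ℕ → g.carrier 3 := fun i j k ↦
    g.br 1 2 3 (by norm_num) (a i) (g.br 1 1 2 (by norm_num) (a j) (a k))
  have hT : T = ∑ p ∈ antidiagonal n, ∑ q ∈ antidiagonal p.2, f p.1 q.1 q.2 := by
    simp only [T, f, bracketSq_eq_sum_antidiagonal, map_sum]
  have hT' : T = ∑ p ∈ antidiagonal n, ∑ q ∈ antidiagonal p.2, f p.1 q.2 q.1 := by
    rw [hT]
    exact sum_congr rfl fun p _ ↦ (Nat.sum_antidiagonal_swap (f := fun q ↦ f p.1 q.1 q.2)).symm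
  have hrot : ∑ p ∈ antidiagonal n, ∑ q ∈ antidiagonal p.2, f q.2 p.1 q.1 = T :=
    (Nat.sum_antidiagonal_antidiagonal_rotate f n).symm.trans hT.symm
  have hrot' : ∑ p ∈ antidiagonal n, ∑ q ∈ antidiagonal p.2, f q.1 p.1 q.2 = T :=
    (Nat.sum_antidiagonal_antidiagonal_rotate (fun i j k ↦ f j i k) n).trans hT'.symm
  have h3T : T + T + T = 0 := by
    have hjac : T = -T - T := calc
      T = ∑ p ∈ antidiagonal n, ∑ q ∈ antidiagonal p.2, (-f q.2 p.1 q.1 - f q.1 p.1 q.2) := by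
          rw [hT]
          exact sum_congr rfl fun p _ ↦ sum_congr rfl fun q _ ↦ g.jacobi_one_one_one _ _ _
      _ = -T - T := by simp only [sum_sub_distrib, sum_neg_distrib, hrot, hrot']
    nth_rewrite 1 [hjac]
    abel
  have : (3 : K) • T = 0 := by
    rw [show (3 : K) = 1 + 1 + 1 by norm_num, add_smul, add_smul, one_smul, h3T]
  exact (smul_eq_zero.mp this).resolve_left three_ne_zero

theorem d_mcCoeff_eq_zero [CharZero K] {n : ℕ} (ha0 : a 0 = 0)
    (hmc : ∀ m < n, g.mcCoeff a m = 0) : g.d 2 3 (by norm_num) (g.mcCoeff a n) = 0 := by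
  have hda : ∀ p ∈ antidiagonal n,
      g.br 1 2 3 (by norm_num) (a p.1) (g.d 1 2 (by norm_num) (a p.2)) =
        -((1 / 2 : K) • g.br 1 2 3 (by norm_num) (a p.1) (g.bracketSq a p.2)) := by
    rintro ⟨i, j⟩ hij
    rw [HasAntidiagonal.mem_antidiagonal] at hij
    rcases Nat.eq_zero_or_pos i with rfl | hi
    · simp [ha0]
    rw [eq_neg_of_add_eq_zero_left (hmc j (by omega)), map_neg, map_smul]
  rw [mcCoeff, map_add, g.d_sq, zero_add, map_smul, d_bracketSq, sum_congr rfl hda,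
    sum_neg_distrib, ← smul_sum, sum_br_bracketSq_eq_zero]
  simp

end MaurerCartan

section Morphism

variable {g l : DGLA K} (φ : ∀ i, g.carrier i →ₗ[K] l.carrier i)

theorem map_mcCoeff
    (hφd : ∀ i j (hij : i + 1 = j) (x : g.carrier i), φ j (g.d i j hij x) = l.d i j hij (φ i x))
    (hφbr : ∀ i j k (h : i + j = k) (x : g.carrier i) (y : g.carrier j),
      φ k (g.br i j k h x y) = l.br i j k h (φ i x) (φ j y))
    (a : ℕ → g.carrier 1) (n : ℕ) :
    φ 2 (g.mcCoeff a n) = l.mcCoeff (fun k ↦ φ 1 (a k)) n := by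
  simp only [mcCoeff, bracketSq, map_add, map_smul, map_sum, hφd, hφbr]

theorem exists_d_eq_of_map_eq_zero {i j k m : ℤ} (hij : i + 1 = j) (hjk : j + 1 = k)
    (hkm : k + 1 = m)
    (hφd : ∀ i j (hij : i + 1 = j) (x : g.carrier i), φ j (g.d i j hij x) = l.d i j hij (φ i x))
    (hsurj : Function.Surjective (φ i))
    (hH_surj : ∀ y : l.carrier j, l.d j k hjk y = 0 →
      ∃ x : g.carrier j, g.d j k hjk x = 0 ∧ ∃ w : l.carrier i, φ j x - y = l.d i j hij w)
    (hH_inj : ∀ x : g.carrier k, g.d k m hkm x = 0 →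
      (∃ w : l.carrier j, φ k x = l.d j k hjk w) → ∃ v : g.carrier j, x = g.d j k hjk v)
    {z : g.carrier k} (hz : g.d k m hkm z = 0) (hφz : φ k z = 0) :
    ∃ v : g.carrier j, g.d j k hjk v = z ∧ φ j v = 0 := by
  obtain ⟨v, rfl⟩ := hH_inj z hz ⟨0, by rw [hφz, map_zero]⟩
  have hφv : l.d j k hjk (φ j v) = 0 := by rw [← hφd, hφz]
  obtain ⟨u, hu, w, huv⟩ := hH_surj (φ j v) hφv
  obtain ⟨w, rfl⟩ := hsurj w
  refine ⟨v - u + g.d i j hij w, ?_, ?_⟩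
  · rw [map_add, map_sub, hu, g.d_sq, sub_zero, add_zero]
  · rw [map_add, map_sub, hφd, ← huv]
    abel

end Morphism

def mcLift (g : DGLA K) (c : ℕ → g.carrier 1) (corr : g.carrier 2 → g.carrier 1) :
    ℕ → g.carrier 1 :=
  Nat.strongRec fun n prev ↦
    if n = 0 then 0 else c n - corr (g.mcCoeff (fun k ↦ if h : k < n then prev k h else c n) n)

section MCLift

variable (g : DGLA K) (c : ℕ → g.carrier 1) (corr : g.carrier 2 → g.carrier 1)

theorem mcLift_eq (n : ℕ) :
    g.mcLift c corr n = if n = 0 then 0 else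
      c n - corr (g.mcCoeff (fun k ↦ if k < n then g.mcLift c corr k else c n) n) := by
  rw [mcLift, Nat.strongRec_eq]
  simp only [dite_eq_ite]
  rfl

theorem mcLift_zero : g.mcLift c corr 0 = 0 := by
  rw [mcLift_eq, if_pos rfl]

theorem mcLift_spec [CharZero K] {l : DGLA K} (φ : ∀ i, g.carrier i →ₗ[K] l.carrier i)
    (hφd : ∀ i j (hij : i + 1 = j) (x : g.carrier i), φ j (g.d i j hij x) = l.d i j hij (φ i x))
    (hφbr : ∀ i j k (h : i + j = k) (x : g.carrier i) (y : g.carrier j),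
      φ k (g.br i j k h x y) = l.br i j k h (φ i x) (φ j y))
    {b : ℕ → l.carrier 1} (hb0 : b 0 = 0) (hb : ∀ n, l.mcCoeff b n = 0)
    (hc : ∀ n, φ 1 (c n) = b n)
    (hcorr : ∀ z, g.d 2 3 (by norm_num) z = 0 → φ 2 z = 0 →
      g.d 1 2 (by norm_num) (corr z) = z ∧ φ 1 (corr z) = 0)
    (n : ℕ) : g.mcCoeff (g.mcLift c corr) n = 0 ∧ φ 1 (g.mcLift c corr n) = b n := by
  induction n using Nat.strong_induction_on with
  | _ n ih =>
  set a := g.mcLift c corr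
  have ha0 : a 0 = 0 := g.mcLift_zero c corr
  rcases Nat.eq_zero_or_pos n with rfl | hn
  · simp [mcCoeff, bracketSq, ha0, hb0]
  set a' : ℕ → g.carrier 1 := fun k ↦ if k < n then a k else c n
  have ha'0 : a' 0 = 0 := by simp [a', hn, ha0]
  have ha' : ∀ k < n, a' k = a k := fun k hk ↦ if_pos hk
  have hclosed : g.d 2 3 (by norm_num) (g.mcCoeff a' n) = 0 :=
    g.d_mcCoeff_eq_zero a' ha'0 fun m hm ↦
      (g.mcCoeff_congr a' fun k hk ↦ ha' k (by omega)).trans (ih m hm).1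
  have hker : φ 2 (g.mcCoeff a' n) = 0 := by
    rw [map_mcCoeff φ hφd hφbr, l.mcCoeff_congr _ fun k hk ↦ ?_, hb]
    rcases hk.lt_or_eq with hk | rfl
    · rw [ha' k hk, (ih k hk).2]
    · simp [a', hc]
  have han : a n = c n - corr (g.mcCoeff a' n) := (g.mcLift_eq c corr n).trans (if_neg hn.ne')
  obtain ⟨hd_corr, hφ_corr⟩ := hcorr _ hclosed hker
  have hdiff := g.mcCoeff_sub_mcCoeff a ha0 ha'0 fun k _ hk ↦ (ha' k hk).symm
  rw [han, show a' n = c n from if_neg n.lt_irrefl, sub_sub_cancel_left, map_neg, hd_corr,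
    sub_eq_neg_self] at hdiff
  exact ⟨hdiff, by rw [han, map_sub, hφ_corr, sub_zero, hc]⟩

end MCLift

end DGLA

theorem surjective_quasi_iso_lifts_MC
    (K : Type) [Field K] [CharZero K] (g l : DGLA K)
    (φ : ∀ i, g.carrier i →ₗ[K] l.carrier i)
    (hφd : ∀ i j (hij : i + 1 = j) (x : g.carrier i),
      φ j (g.d i j hij x) = l.d i j hij (φ i x))
    (hφbr : ∀ i j k (h : i + j = k) (x : g.carrier i) (y : g.carrier j),
      φ k (g.br i j k h x y) = l.br i j k h (φ i x) (φ j y))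
    (hφsurj : ∀ i : ℤ, Function.Surjective (φ i))
    (hqis_surj : ∀ (i i' i'' : ℤ) (h1 : i + 1 = i') (h2 : i' + 1 = i'')
      (y : l.carrier i'), l.d i' i'' h2 y = 0 →
      ∃ x : g.carrier i', g.d i' i'' h2 x = 0 ∧
        ∃ w : l.carrier i, φ i' x - y = l.d i i' h1 w)
    (hqis_inj : ∀ (i i' i'' : ℤ) (h1 : i + 1 = i') (h2 : i' + 1 = i'')
      (x : g.carrier i'), g.d i' i'' h2 x = 0 →
      (∃ w : l.carrier i, φ i' x = l.d i i' h1 w) →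
      ∃ v : g.carrier i, x = g.d i i' h1 v)
    (b : ℕ → l.carrier 1) (hb0 : b 0 = 0)
    (hMCb : ∀ n : ℕ,
      l.d 1 2 (by norm_num) (b n)
        + (1 / 2 : K) • ∑ i ∈ Finset.range (n + 1),
            l.br 1 1 2 (by norm_num) (b i) (b (n - i)) = 0) :
    ∃ a : ℕ → g.carrier 1, a 0 = 0 ∧
      (∀ n : ℕ,
        g.d 1 2 (by norm_num) (a n)
          + (1 / 2 : K) • ∑ i ∈ Finset.range (n + 1),
              g.br 1 1 2 (by norm_num) (a i) (a (n - i)) = 0) ∧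
      (∀ n : ℕ, φ 1 (a n) = b n) := by
  choose c hc using fun n ↦ hφsurj 1 (b n)
  choose! corr hcorr using fun z (hz : g.d 2 3 (by norm_num) z = 0) (hφz : φ 2 z = 0) ↦
    DGLA.exists_d_eq_of_map_eq_zero φ (by norm_num : (0 : ℤ) + 1 = 1) (by norm_num)
      (by norm_num) hφd (hφsurj 0) (hqis_surj 0 1 2 _ _) (hqis_inj 1 2 3 _ _) hz hφz
  have hlift := g.mcLift_spec c corr φ hφd hφbr hb0 hMCb hc hcorr
  exact ⟨g.mcLift c corr, g.mcLift_zero c corr, fun n ↦ (hlift n).1, fun n ↦ (hlift n).2⟩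
end
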